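/- (Extended mechanism, price consistency at equilibrium) In the extended mechanism allowing |C_i| ≥ 2, let m* be any generalized Nash equilibrium of the induced game. Then for every platform i ∈ I with |C_i| = 2, writing C_i = {i, l}, the price platform i proposes for its own filter equals the price proposed for i's filter by its competitor: p̃_i^{i*} = p̃_i^{l*}. Consequently, for every i ∈ I and every l ∈ C_{-i}, the equilibrium subsidy price received by platform i from platform l equals the equilibrium payment price paid by platform l for platform i's filter: σ_l^{*i} = π_i^{*l}. -/

import Mathlib

open Finset

noncomputable section

namespace MisinfoFilterExtended

/-- A message of a social-media platform: the proposed minimum average trust `ht`,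
the proposed prices `pP l` for the filters of the other competing platforms,
the proposed price `pG` for the government's lower bound, the proposed filters `a k`
for the competing platforms and the proposed lower bound `aG` for the government. -/
structure PlatformMsg (N : ℕ) where
  ht : ℝ
  pP : Fin N → ℝ
  pG : ℝ
  a : Fin N → ℝ
  aG : ℝ

/-- The government's message: a proposed price `pG` and a proposed lower bound `aG`. -/
structure GovMsg where
  pG : ℝ
  aG : ℝ

/-- A message profile: one message per platform and one for the government. -/
structure Profile (N : ℕ) where
  pf : Fin N → PlatformMsg N
  gov : GovMsg

/-- Validity of a platform message: nonnegative proposed trust and prices. -/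
def PlatformMsg.Valid {N : ℕ} (msg : PlatformMsg N) : Prop :=
  0 ≤ msg.ht ∧ (∀ l, 0 ≤ msg.pP l) ∧ 0 ≤ msg.pG

/-- Validity of a government message: nonnegative proposed price. -/
def GovMsg.Valid (g : GovMsg) : Prop := 0 ≤ g.pG

/-- Unilateral deviation of platform `i` to message `msg`. -/
def Profile.updPf {N : ℕ} (m : Profile N) (i : Fin N) (msg : PlatformMsg N) : Profile N :=
  ⟨Function.update m.pf i msg, m.gov⟩

/-- Unilateral deviation of the government to message `g`. -/
def Profile.updGov {N : ℕ} (m : Profile N) (g : GovMsg) : Profile N :=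
  ⟨m.pf, g⟩

/-- The data of the misinformation-filtering game: `N ≥ 1` platforms, competing sets
`C i ∋ i` with `|C i| ≥ 2` and symmetric competition, user fractions `n` (positive,
summing to one), average trust functions `h i`, valuations `v i` (each depending only on
the coordinates in `C i`), the government's valuation `v0` and budget `b0 ≥ 0`. -/
structure Framework (N : ℕ) where
  hN : 1 ≤ N
  C : Fin N → Finset (Fin N)
  mem_C : ∀ i, i ∈ C i
  card_C : ∀ i, 2 ≤ (C i).card
  symm_C : ∀ i k, i ∈ C k ↔ k ∈ C i
  n : Fin N → ℝ
  n_pos : ∀ i, 0 < n i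
  n_sum : ∑ i, n i = 1
  h : Fin N → ℝ → ℝ
  v : Fin N → (Fin N → ℝ) → ℝ
  v_localized : ∀ i p q, (∀ k ∈ C i, p k = q k) → v i p = v i q
  v0 : ℝ → ℝ
  b0 : ℝ
  b0_nonneg : 0 ≤ b0

namespace Framework

variable {N : ℕ}

/-- Allocated filter `α_i(m)`: the average of proposals for `i` by the platforms in `C i`. -/
def alpha (F : Framework N) (m : Profile N) (i : Fin N) : ℝ :=
  (∑ k ∈ F.C i, (m.pf k).a i) / ((F.C i).card : ℝ)

/-- Allocated lower bound `α₀(m)`: the average of all proposed lower bounds. -/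
def alpha0 (F : Framework N) (m : Profile N) : ℝ :=
  (m.gov.aG + ∑ k, (m.pf k).aG) / ((N : ℝ) + 1)

/-- `Σ_k n_k · h̃_k`. -/
def trustSum (F : Framework N) (m : Profile N) : ℝ := ∑ k, F.n k * (m.pf k).ht

/-- Allocated minimum average trust `η_i(m)`. -/
def eta (F : Framework N) (m : Profile N) (i : Fin N) : ℝ :=
  min ((F.n i * (m.pf i).ht / F.trustSum m) * F.alpha0 m) 1

/-- Extended payment price `π_target^payer` paid by `payer` per unit of the filter of
`target`: the price `p̃_target^target` proposed by `target` itself when `|C target| = 2`,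
and otherwise the average of the prices proposed for `target` by the platforms in
`C target` other than `target` and `payer`. -/
def price (F : Framework N) (m : Profile N) (payer target : Fin N) : ℝ :=
  if (F.C target).card = 2 then (m.pf target).pP target
  else
    (∑ k ∈ ((F.C target).erase target).erase payer, (m.pf k).pP target) /
      (((F.C target).card : ℝ) - 2)

/-- Extended subsidy price `σ_l^i` received by platform `i` from platform `l` per unit of
the filter of `i`: the price `p̃_i^l` proposed by `l` when `|C i| = 2`, and otherwise the
average of the prices proposed for `i` by the platforms in `C i` other than `i`, `l`. -/
def subsidy (F : Framework N) (m : Profile N) (i l : Fin N) : ℝ :=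
  if (F.C i).card = 2 then (m.pf l).pP i
  else
    (∑ k ∈ ((F.C i).erase i).erase l, (m.pf k).pP i) / (((F.C i).card : ℝ) - 2)

/-- Allocated government price `π₀`. -/
def price0 (F : Framework N) (m : Profile N) : ℝ := (∑ i, (m.pf i).pG) / (N : ℝ)

/-- Average proposal `ã_l^{-i}` for platform `l` by the platforms in `C l` other than `i`. -/
def aAvgMinus (F : Framework N) (m : Profile N) (i l : Fin N) : ℝ :=
  (∑ k ∈ (F.C l).erase i, (m.pf k).a l) / (((F.C l).card : ℝ) - 1)

/-- Average proposal `ã₀^{-i}` of lower bounds by all players except platform `i`. -/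
def aGAvgMinus (F : Framework N) (m : Profile N) (i : Fin N) : ℝ :=
  (m.gov.aG + ∑ k, (m.pf k).aG - (m.pf i).aG) / (N : ℝ)

/-- Extended tax `τ_i(m)` of platform `i`, including the price-consistency penalties that
apply when `|C i| = 2` or `|C l| = 2` for a competitor `l`. -/
def tax (F : Framework N) (m : Profile N) (i : Fin N) : ℝ :=
  - m.gov.pG * F.eta m i
  - (∑ l ∈ (F.C i).erase i, F.subsidy m i l) * F.alpha m i
  + ∑ l ∈ (F.C i).erase i, F.price m i l * F.alpha m l
  + (∑ l ∈ (F.C i).erase i, (m.pf i).pP l * ((m.pf i).a l - F.aAvgMinus m i l) ^ 2)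
  + (m.pf i).pG * ((m.pf i).aG - F.aGAvgMinus m i) ^ 2
  + ∑ l ∈ (F.C i).erase i,
      ((if (F.C i).card = 2 then ((m.pf i).pP i - (m.pf l).pP i) ^ 2 else 0)
        + (if (F.C l).card = 2 then ((m.pf i).pP l - (m.pf l).pP l) ^ 2 else 0))

/-- Tax (investment) `τ₀(m)` of the government. -/
def tax0 (F : Framework N) (m : Profile N) : ℝ :=
  F.price0 m * F.alpha0 m + (m.gov.pG - F.price0 m) ^ 2

/-- Utility of platform `i`. -/
def util (F : Framework N) (m : Profile N) (i : Fin N) : ℝ :=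
  F.v i (F.alpha m) - F.tax m i

/-- Utility of the government. -/
def util0 (F : Framework N) (m : Profile N) : ℝ := F.v0 (F.alpha0 m) - F.tax0 m

/-- An admissible message profile: all messages valid and `Σ_k n_k h̃_k > 0`
(profiles with `Σ_k n_k h̃_k = 0` are excluded by the social planner). -/
def ProfileValid (F : Framework N) (m : Profile N) : Prop :=
  (∀ i, (m.pf i).Valid) ∧ m.gov.Valid ∧ 0 < F.trustSum m

/-- Generalized Nash equilibrium of the induced game: the profile is admissible, every
player's own allocation is feasible, no platform can profit by a unilateral deviation whose
allocated filter stays in its feasible set `S_i`, and the government cannot profit by a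
unilateral deviation satisfying its feasibility and budget constraints. -/
def IsGNE (F : Framework N) (m : Profile N) : Prop :=
  F.ProfileValid m ∧
  (∀ i, F.alpha m i ∈ Set.Icc (0:ℝ) 1 ∧ F.eta m i ≤ F.n i * F.h i (F.alpha m i)) ∧
  F.alpha0 m ∈ Set.Icc (0:ℝ) 1 ∧ F.price0 m * F.alpha0 m ≤ F.b0 ∧
  (∀ (i : Fin N) (msg : PlatformMsg N), msg.Valid →
    0 < F.trustSum (m.updPf i msg) →
    F.alpha (m.updPf i msg) i ∈ Set.Icc (0:ℝ) 1 →
    F.eta (m.updPf i msg) i ≤ F.n i * F.h i (F.alpha (m.updPf i msg) i) →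
    F.util (m.updPf i msg) i ≤ F.util m i) ∧
  (∀ g : GovMsg, g.Valid →
    F.alpha0 (m.updGov g) ∈ Set.Icc (0:ℝ) 1 →
    F.price0 (m.updGov g) * F.alpha0 (m.updGov g) ≤ F.b0 →
    F.util0 (m.updGov g) ≤ F.util0 m)

end Framework

/-- The standing regularity assumptions of the model: each `h i` maps `[0,1]` into `[0,1]`
and is strictly increasing, concave and differentiable; each valuation `v i` is nonnegative,
concave and differentiable on the box, decreasing in the own coordinate and strictly
increasing in the coordinates of the other competing platforms; the government's valuation
`v0` is nonnegative, increasing, concave and differentiable on `[0,1]`. -/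
structure Framework.Regular {N : ℕ} (F : Framework N) : Prop where
  h_maps : ∀ i, Set.MapsTo (F.h i) (Set.Icc 0 1) (Set.Icc 0 1)
  h_strictMono : ∀ i, StrictMonoOn (F.h i) (Set.Icc 0 1)
  h_concave : ∀ i, ConcaveOn ℝ (Set.Icc 0 1) (F.h i)
  h_diff : ∀ i, DifferentiableOn ℝ (F.h i) (Set.Icc 0 1)
  v_nonneg : ∀ i p, (∀ k, p k ∈ Set.Icc (0:ℝ) 1) → 0 ≤ F.v i p
  v_concave : ∀ i, ConcaveOn ℝ {p : Fin N → ℝ | ∀ k, p k ∈ Set.Icc (0:ℝ) 1} (F.v i)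
  v_diff : ∀ i, DifferentiableOn ℝ (F.v i) {p : Fin N → ℝ | ∀ k, p k ∈ Set.Icc (0:ℝ) 1}
  v_own_anti : ∀ i p, (∀ k, p k ∈ Set.Icc (0:ℝ) 1) →
    ∀ x y : ℝ, x ∈ Set.Icc (0:ℝ) 1 → y ∈ Set.Icc (0:ℝ) 1 → x ≤ y →
      F.v i (Function.update p i y) ≤ F.v i (Function.update p i x)
  v_other_strictMono : ∀ i l, l ∈ F.C i → l ≠ i →
    ∀ p, (∀ k, p k ∈ Set.Icc (0:ℝ) 1) →
    ∀ x y : ℝ, x ∈ Set.Icc (0:ℝ) 1 → y ∈ Set.Icc (0:ℝ) 1 → x < y →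
      F.v i (Function.update p l x) < F.v i (Function.update p l y)
  v0_nonneg : ∀ x ∈ Set.Icc (0:ℝ) 1, 0 ≤ F.v0 x
  v0_mono : MonotoneOn F.v0 (Set.Icc 0 1)
  v0_concave : ConcaveOn ℝ (Set.Icc 0 1) F.v0
  v0_diff : DifferentiableOn ℝ F.v0 (Set.Icc 0 1)

end MisinfoFilterExtended

end

namespace MisinfoFilterExtended

/-! When `|C i| = 2`, platform `i` may replace its own-filter price `p̃_i^i` by its
competitor's `p̃_i^l`. This changes no allocation, and neither the subsidy `i` receives nor
the prices `i` pays, since these are set by the other platforms' messages; it only removes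
the penalty `(p̃_i^i − p̃_i^l)²` from `i`'s tax. At a GNE this deviation cannot be profitable,
so the penalty vanishes. The equality `σ_l^i = π_i^l` is then read off the definitions. -/

theorem _root_.Finset.erase_eq_singleton_of_card_eq_two {α : Type*} [DecidableEq α]
    {s : Finset α} {a b : α} (hs : s.card = 2) (ha : a ∈ s) (hb : b ∈ s) (hba : b ≠ a) :
    s.erase a = {b} := by
  have hcard : (s.erase a).card = 1 := by rw [Finset.card_erase_of_mem ha, hs]
  obtain ⟨c, hc⟩ := Finset.card_eq_one.mp hcard
  have hb' : b ∈ s.erase a := Finset.mem_erase.mpr ⟨hba, hb⟩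
  rw [hc] at hb' ⊢
  rw [Finset.mem_singleton.mp hb']

def PlatformMsg.withPrice {N : ℕ} (msg : PlatformMsg N) (j : Fin N) (p : ℝ) : PlatformMsg N :=
  { msg with pP := Function.update msg.pP j p }

theorem PlatformMsg.Valid.withPrice {N : ℕ} {msg : PlatformMsg N} (hmsg : msg.Valid)
    (j : Fin N) {p : ℝ} (hp : 0 ≤ p) : (msg.withPrice j p).Valid := by
  obtain ⟨hht, hpP, hpG⟩ := hmsg
  refine ⟨hht, fun k => ?_, hpG⟩
  rcases eq_or_ne k j with rfl | hk
  · simpa [PlatformMsg.withPrice] using hp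
  · simpa [PlatformMsg.withPrice, Function.update_of_ne hk] using hpP k

namespace Profile

variable {N : ℕ} {m : Profile N} {i : Fin N} {msg : PlatformMsg N}

theorem updPf_gov : (m.updPf i msg).gov = m.gov := rfl

theorem updPf_pf_self : (m.updPf i msg).pf i = msg :=
  Function.update_self _ _ _

theorem updPf_pf_of_ne {k : Fin N} (hk : k ≠ i) : (m.updPf i msg).pf k = m.pf k :=
  Function.update_of_ne hk _ _

theorem updPf_pf_apply_of_eq {β : Type*} (f : PlatformMsg N → β) (h : f msg = f (m.pf i))
    (k : Fin N) : f ((m.updPf i msg).pf k) = f (m.pf k) := by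
  rcases eq_or_ne k i with rfl | hk
  · exact (congrArg f updPf_pf_self).trans h
  · rw [updPf_pf_of_ne hk]

end Profile

namespace Framework

open Profile

variable {N : ℕ} (F : Framework N) {m : Profile N} {i : Fin N} {msg : PlatformMsg N}

theorem trustSum_updPf (h : msg.ht = (m.pf i).ht) :
    F.trustSum (m.updPf i msg) = F.trustSum m := by
  simp only [trustSum, updPf_pf_apply_of_eq PlatformMsg.ht h]

theorem alpha_updPf (h : msg.a = (m.pf i).a) : F.alpha (m.updPf i msg) = F.alpha m := by
  funext j
  simp only [alpha, updPf_pf_apply_of_eq PlatformMsg.a h]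

theorem alpha0_updPf (h : msg.aG = (m.pf i).aG) : F.alpha0 (m.updPf i msg) = F.alpha0 m := by
  simp only [alpha0, updPf_gov, updPf_pf_apply_of_eq PlatformMsg.aG h]

theorem eta_updPf (hht : msg.ht = (m.pf i).ht) (haG : msg.aG = (m.pf i).aG) :
    F.eta (m.updPf i msg) i = F.eta m i := by
  simp only [eta, F.trustSum_updPf hht, F.alpha0_updPf haG,
    updPf_pf_apply_of_eq PlatformMsg.ht hht]

theorem aAvgMinus_updPf (h : msg.a = (m.pf i).a) (l : Fin N) :
    F.aAvgMinus (m.updPf i msg) i l = F.aAvgMinus m i l := by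
  simp only [aAvgMinus, updPf_pf_apply_of_eq PlatformMsg.a h]

theorem aGAvgMinus_updPf (h : msg.aG = (m.pf i).aG) :
    F.aGAvgMinus (m.updPf i msg) i = F.aGAvgMinus m i := by
  simp only [aGAvgMinus, updPf_gov, updPf_pf_apply_of_eq PlatformMsg.aG h]

theorem subsidy_updPf_self {l : Fin N} (hli : l ≠ i) :
    F.subsidy (m.updPf i msg) i l = F.subsidy m i l := by
  unfold subsidy
  split_ifs
  · rw [updPf_pf_of_ne hli]
  · refine congrArg (· / _) (Finset.sum_congr rfl fun k hk => ?_)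
    rw [updPf_pf_of_ne (Finset.ne_of_mem_erase (Finset.mem_of_mem_erase hk))]

theorem price_updPf_self {l : Fin N} (hli : l ≠ i) :
    F.price (m.updPf i msg) i l = F.price m i l := by
  unfold price
  split_ifs
  · rw [updPf_pf_of_ne hli]
  · refine congrArg (· / _) (Finset.sum_congr rfl fun k hk => ?_)
    rw [updPf_pf_of_ne (Finset.ne_of_mem_erase hk)]

variable {F} in
theorem IsGNE.util_updPf_le (hm : F.IsGNE m) (hmsg : msg.Valid) (hht : msg.ht = (m.pf i).ht)
    (ha : msg.a = (m.pf i).a) (haG : msg.aG = (m.pf i).aG) :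
    F.util (m.updPf i msg) i ≤ F.util m i := by
  obtain ⟨⟨-, -, htrust⟩, hfeas, -, -, hdev, -⟩ := hm
  apply hdev i msg hmsg
  · rwa [F.trustSum_updPf hht]
  · rw [F.alpha_updPf ha]; exact (hfeas i).1
  · rw [F.eta_updPf hht haG, F.alpha_updPf ha]; exact (hfeas i).2

theorem util_updPf_withPrice_self {l : Fin N} (hcard : (F.C i).card = 2) (hl : l ∈ F.C i)
    (hli : l ≠ i) :
    F.util (m.updPf i ((m.pf i).withPrice i ((m.pf l).pP i))) i =
      F.util m i + ((m.pf i).pP i - (m.pf l).pP i) ^ 2 := by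
  set msg := (m.pf i).withPrice i ((m.pf l).pP i)
  have hpPl : msg.pP l = (m.pf i).pP l := Function.update_of_ne hli _ _
  have hpPi : msg.pP i = (m.pf l).pP i := Function.update_self _ _ _
  simp only [util, tax, Finset.erase_eq_singleton_of_card_eq_two hcard (F.mem_C i) hl hli,
    Finset.sum_singleton, if_pos hcard, F.alpha_updPf (msg := msg) rfl,
    F.eta_updPf (msg := msg) rfl rfl, F.aAvgMinus_updPf (msg := msg) rfl,
    F.aGAvgMinus_updPf (msg := msg) rfl, F.subsidy_updPf_self hli, F.price_updPf_self hli,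
    updPf_gov, updPf_pf_self, hpPl, hpPi, updPf_pf_of_ne hli, sub_self]
  simp only [msg, PlatformMsg.withPrice]
  ring

variable {F} in
theorem IsGNE.own_price_eq (hm : F.IsGNE m) {l : Fin N} (hcard : (F.C i).card = 2)
    (hl : l ∈ F.C i) (hli : l ≠ i) : (m.pf i).pP i = (m.pf l).pP i := by
  have hvalid := (hm.1.1 i).withPrice i ((hm.1.1 l).2.1 i)
  have hle := hm.util_updPf_le hvalid rfl rfl rfl
  rw [F.util_updPf_withPrice_self hcard hl hli] at hle
  have hsq : ((m.pf i).pP i - (m.pf l).pP i) ^ 2 = 0 := le_antisymm (by linarith) (sq_nonneg _)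
  exact sub_eq_zero.mp (pow_eq_zero_iff two_ne_zero |>.mp hsq)

variable {F} in
theorem IsGNE.subsidy_eq_price (hm : F.IsGNE m) {l : Fin N} (hl : l ∈ F.C i) (hli : l ≠ i) :
    F.subsidy m i l = F.price m l i := by
  unfold subsidy price
  split_ifs with hcard
  · exact (hm.own_price_eq hcard hl hli).symm
  · rfl

end Framework

theorem extended_price_consistency_at_GNE_general {N : ℕ} (F : Framework N)
    (m : Profile N) (hm : F.IsGNE m) :
    (∀ i l, (F.C i).card = 2 → l ∈ F.C i → l ≠ i →
      (m.pf i).pP i = (m.pf l).pP i) ∧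
    (∀ i l, l ∈ F.C i → l ≠ i → F.subsidy m i l = F.price m l i) :=
  ⟨fun _ _ hcard hl hli => hm.own_price_eq hcard hl hli,
    fun _ _ hl hli => hm.subsidy_eq_price hl hli⟩

/-- **Extended mechanism, price consistency at equilibrium.** In the
extended mechanism allowing `|C i| ≥ 2`, at any GNE `m` of the induced game, every platform
`i` with `|C i| = 2` proposes for its own filter the same price as its competitor `l`
(`p̃_i^{i*} = p̃_i^{l*}`), and consequently, for every `i` and every `l ∈ C_{-i}`, the
equilibrium subsidy price received by `i` from `l` equals the equilibrium payment price
paid by `l` for `i`'s filter: `σ_l^{*i} = π_i^{*l}`. -/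
theorem extended_price_consistency_at_GNE {N : ℕ} (F : Framework N) (hreg : F.Regular)
    (m : Profile N) (hm : F.IsGNE m) :
    (∀ i l, (F.C i).card = 2 → l ∈ F.C i → l ≠ i →
      (m.pf i).pP i = (m.pf l).pP i) ∧
    (∀ i l, l ∈ F.C i → l ≠ i → F.subsidy m i l = F.price m l i) :=
  extended_price_consistency_at_GNE_general F m hm

end MisinfoFilterExtended
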